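/- arXiv:2302.00511 — 6 statements merged into one kernel-verified Lean document; each statement's English description precedes it below -/
import Mathlib

section
/- Let η, R, s, s_max, n, ñ be natural numbers with η ≥ 2, s ≤ s_max, ñ ≤ n, and n·(s+1) ≤ (s_max+1)·η^s. Then, as real numbers, ∑_{k=0}^{s} (⌊n/η^k⌋ − ⌊ñ/η^k⌋) · (R·η^k/η^s) ≤ (s_max+1)·R. -/
open Finset

/-- Step 1 of the proof of Theorem 1: efficient IterativeDeepening-SuccessiveHalving
never exceeds the budget `B = (s_max + 1) * R`. -/
theorem stmt_1 (η R s smax n ntil : ℕ) (hη : 2 ≤ η) (hs : s ≤ smax) (hntil : ntil ≤ n)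
    (hn : n * (s + 1) ≤ (smax + 1) * η ^ s) :
    ∑ k ∈ Finset.range (s + 1),
      (((n / η ^ k : ℕ) : ℝ) - ((ntil / η ^ k : ℕ) : ℝ)) * ((R : ℝ) * η ^ k / η ^ s)
      ≤ ((smax : ℝ) + 1) * R := by
  have hηR : (2:ℝ) ≤ (η:ℝ) := by exact_mod_cast hη
  have hηpos : (0:ℝ) < (η:ℝ) := by linarith
  have hpow : ∀ k : ℕ, (0:ℝ) < (η:ℝ) ^ k := fun k => pow_pos hηpos k
  have hterm : ∀ k ∈ Finset.range (s + 1),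
      (((n / η ^ k : ℕ) : ℝ) - ((ntil / η ^ k : ℕ) : ℝ)) * ((R : ℝ) * η ^ k / η ^ s)
        ≤ (n : ℝ) * R / (η : ℝ) ^ s := by
    intro k _
    have h1 : (((n / η ^ k : ℕ) : ℝ)) - ((ntil / η ^ k : ℕ) : ℝ) ≤ (n : ℝ) / (η : ℝ) ^ k := by
      have h2 : ((n / η ^ k : ℕ) : ℝ) ≤ (n : ℝ) / (η : ℝ) ^ k := by
        have := Nat.cast_div_le (m := n) (n := η ^ k) (α := ℝ)
        simpa using this
      have h3 : (0:ℝ) ≤ ((ntil / η ^ k : ℕ) : ℝ) := by positivity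
      linarith
    have hfac : (0:ℝ) ≤ (R : ℝ) * (η:ℝ) ^ k / (η:ℝ) ^ s := by positivity
    calc (((n / η ^ k : ℕ) : ℝ) - ((ntil / η ^ k : ℕ) : ℝ)) * ((R : ℝ) * η ^ k / η ^ s)
        ≤ ((n : ℝ) / (η : ℝ) ^ k) * ((R : ℝ) * η ^ k / η ^ s) :=
          mul_le_mul_of_nonneg_right h1 hfac
      _ = (n : ℝ) * R / (η : ℝ) ^ s := by
          field_simp
  calc ∑ k ∈ Finset.range (s + 1),
      (((n / η ^ k : ℕ) : ℝ) - ((ntil / η ^ k : ℕ) : ℝ)) * ((R : ℝ) * η ^ k / η ^ s)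
      ≤ ∑ _k ∈ Finset.range (s + 1), (n : ℝ) * R / (η : ℝ) ^ s :=
        Finset.sum_le_sum hterm
    _ = ((s:ℝ) + 1) * ((n : ℝ) * R / (η : ℝ) ^ s) := by
        simp [Finset.sum_const]
    _ ≤ ((smax : ℝ) + 1) * R := by
        rw [mul_div_assoc', div_le_iff₀ (hpow s)]
        have hn' : ((n:ℝ)) * ((s:ℝ) + 1) ≤ ((smax:ℝ) + 1) * (η:ℝ) ^ s := by
          exact_mod_cast hn
        nlinarith [hn', Nat.cast_nonneg (α := ℝ) R, hpow s]
end

section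
/- Let η, n, R, s be natural numbers with η ≥ 2 and R ≥ η^s. Then, as real numbers, ∑_{k=0}^{s} ⌊n/η^k⌋·⌊R·η^k/η^s⌋ ≥ [(s+1)·(n·R + η^s)·(η−1) − (η^{s+1} − 1)·(R + n)] / (η^s·(η−1)). -/
open Finset

/-- Lower bound on the total number of pulls of SuccessiveHalving
(proof of Theorem 2). -/
theorem stmt_5 (η n R s : ℕ) (hη : 2 ≤ η) (hR : η ^ s ≤ R) :
    (((s : ℝ) + 1) * ((n : ℝ) * R + (η : ℝ) ^ s) * ((η : ℝ) - 1)
        - ((η : ℝ) ^ (s + 1) - 1) * ((R : ℝ) + n)) / ((η : ℝ) ^ s * ((η : ℝ) - 1))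
      ≤ ∑ k ∈ Finset.range (s + 1),
          ((n / η ^ k : ℕ) : ℝ) * ((R * η ^ k / η ^ s : ℕ) : ℝ) := by
  set e : ℝ := (η : ℝ) with he
  have he1 : (1:ℝ) < e := by
    have : (2:ℝ) ≤ e := by rw [he]; exact_mod_cast hη
    linarith
  have he0 : (0:ℝ) < e := by linarith
  have hes : (0:ℝ) < e ^ s := pow_pos he0 s
  have hη0 : 0 < η := by omega
  -- per-term lower bound
  have hterm : ∀ k ∈ Finset.range (s + 1),
      ((n:ℝ) * e ^ (s - k) / e ^ s - 1) * ((R:ℝ) * e ^ k / e ^ s - 1)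
        ≤ ((n / η ^ k : ℕ) : ℝ) * ((R * η ^ k / η ^ s : ℕ) : ℝ) := by
    intro k hk
    have hk' : k ≤ s := by simpa [Nat.lt_succ_iff] using hk
    have hek : (0:ℝ) < e ^ k := pow_pos he0 k
    have hek1 : (1:ℝ) ≤ e ^ k := one_le_pow₀ he1.le
    have hpow : e ^ (s - k) * e ^ k = e ^ s := by
      rw [← pow_add, Nat.sub_add_cancel hk']
    have ha0 : (0:ℝ) ≤ ((n / η ^ k : ℕ) : ℝ) := Nat.cast_nonneg _
    have hbN : 1 ≤ R * η ^ k / η ^ s := by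
      apply Nat.one_le_div_iff (pow_pos hη0 s) |>.2
      calc η ^ s ≤ R := hR
        _ ≤ R * η ^ k := Nat.le_mul_of_pos_right _ (pow_pos hη0 k)
    have hb1 : (1:ℝ) ≤ ((R * η ^ k / η ^ s : ℕ) : ℝ) := by exact_mod_cast hbN
    -- x - 1 ≤ a
    have hx : (n:ℝ) * e ^ (s - k) / e ^ s - 1 ≤ ((n / η ^ k : ℕ) : ℝ) := by
      have hdm := Nat.div_add_mod n (η ^ k)
      have hmlt := Nat.mod_lt n (pow_pos hη0 k)
      have h1 : (n:ℝ) = e ^ k * ((n / η ^ k : ℕ) : ℝ) + ((n % η ^ k : ℕ) : ℝ) := by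
        rw [he]; exact_mod_cast hdm.symm
      have h2 : ((n % η ^ k : ℕ) : ℝ) < e ^ k := by rw [he]; exact_mod_cast hmlt
      rw [div_sub_one (ne_of_gt hes), div_le_iff₀ hes]
      nlinarith [hpow, hek]
    -- y - 1 ≤ b
    have hy : (R:ℝ) * e ^ k / e ^ s - 1 ≤ ((R * η ^ k / η ^ s : ℕ) : ℝ) := by
      have hdm := Nat.div_add_mod (R * η ^ k) (η ^ s)
      have hmlt := Nat.mod_lt (R * η ^ k) (pow_pos hη0 s)
      have h1 : (R:ℝ) * e ^ k
          = e ^ s * ((R * η ^ k / η ^ s : ℕ) : ℝ) + ((R * η ^ k % η ^ s : ℕ) : ℝ) := by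
        rw [he]; exact_mod_cast hdm.symm
      have h2 : ((R * η ^ k % η ^ s : ℕ) : ℝ) < e ^ s := by rw [he]; exact_mod_cast hmlt
      rw [div_sub_one (ne_of_gt hes), div_le_iff₀ hes]
      nlinarith
    -- y ≥ 1
    have hy1 : (1:ℝ) ≤ (R:ℝ) * e ^ k / e ^ s := by
      rw [le_div_iff₀ hes, one_mul]
      have hRr : e ^ s ≤ (R:ℝ) := by rw [he]; exact_mod_cast hR
      nlinarith
    nlinarith [hx, hy, ha0, hb1, hy1]
  refine le_trans ?_ (Finset.sum_le_sum hterm)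
  have hG : (∑ k ∈ Finset.range (s+1), e ^ k) * (e - 1) = e ^ (s+1) - 1 :=
    geom_sum_mul e (s+1)
  have hsum : ∑ k ∈ Finset.range (s + 1),
      ((n:ℝ) * e ^ (s - k) / e ^ s - 1) * ((R:ℝ) * e ^ k / e ^ s - 1)
      = ((s:ℝ)+1) * ((n:ℝ) * R / e ^ s + 1)
        - ((n:ℝ) + R) / e ^ s * (∑ k ∈ Finset.range (s+1), e ^ k) := by
    have hrefl : ∑ k ∈ Finset.range (s+1), e ^ (s - k)
        = ∑ k ∈ Finset.range (s+1), e ^ k := by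
      rw [← Finset.sum_range_reflect]
      apply Finset.sum_congr rfl
      intro k hk
      have hk' : k ≤ s := by simpa [Nat.lt_succ_iff] using hk
      congr 1
      omega
    have expand : ∀ k ∈ Finset.range (s+1),
        ((n:ℝ) * e ^ (s - k) / e ^ s - 1) * ((R:ℝ) * e ^ k / e ^ s - 1)
        = ((n:ℝ) * R / e ^ s + 1) - ((n:ℝ) / e ^ s * e ^ (s - k) + (R:ℝ) / e ^ s * e ^ k) := by
      intro k hk
      have hk' : k ≤ s := by simpa [Nat.lt_succ_iff] using hk
      have hpow : e ^ (s - k) * e ^ k = e ^ s := by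
        rw [← pow_add, Nat.sub_add_cancel hk']
      field_simp
      linear_combination ((n:ℝ) * R) * hpow
    rw [Finset.sum_congr rfl expand, Finset.sum_sub_distrib, Finset.sum_const,
      Finset.sum_add_distrib, ← Finset.mul_sum, ← Finset.mul_sum, hrefl,
      Finset.card_range]
    push_cast
    ring
  rw [hsum]
  have heq : (((s : ℝ) + 1) * ((n : ℝ) * R + e ^ s) * (e - 1)
        - (e ^ (s + 1) - 1) * ((R : ℝ) + n)) / (e ^ s * (e - 1))
      = ((s:ℝ)+1) * ((n:ℝ) * R / e ^ s + 1)
        - ((n:ℝ) + R) / e ^ s * (∑ k ∈ Finset.range (s+1), e ^ k) := by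
    have hne : e - 1 ≠ 0 := by linarith
    field_simp
    linear_combination ((n:ℝ) + R) * hG
  rw [heq]
end

section
/- Let η, n, ñ, R, s be natural numbers with η ≥ 2 and ñ ≤ n. Then, as real numbers, ∑_{k=0}^{s} (⌊n/η^k⌋ − ⌊ñ/η^k⌋)·⌊R·η^k/η^s⌋ ≤ [(s+1)·(n−ñ)·R·(η−1) + R·(η^{s+1} − 1)] / (η^s·(η−1)). -/
open Finset

/-- Upper bound on the total pulls of efficient IterativeDeepening-SuccessiveHalving
(proof of Theorem 2 a). -/
theorem stmt_7 (η n ntil R s : ℕ) (hη : 2 ≤ η) (hntil : ntil ≤ n) :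
    ∑ k ∈ Finset.range (s + 1),
        (((n / η ^ k : ℕ) : ℝ) - ((ntil / η ^ k : ℕ) : ℝ)) * ((R * η ^ k / η ^ s : ℕ) : ℝ)
      ≤ (((s : ℝ) + 1) * ((n : ℝ) - ntil) * R * ((η : ℝ) - 1)
          + (R : ℝ) * ((η : ℝ) ^ (s + 1) - 1)) / ((η : ℝ) ^ s * ((η : ℝ) - 1)) := by
  have he2 : (2:ℝ) ≤ (η:ℝ) := by exact_mod_cast hη
  have he1 : (1:ℝ) < (η:ℝ) := by linarith
  have he0 : (0:ℝ) < (η:ℝ) := by linarith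
  set e : ℝ := (η:ℝ) with hedef
  have hpow : ∀ k : ℕ, (0:ℝ) < e ^ k := fun k => pow_pos he0 k
  -- pointwise bound
  have key : ∀ k ∈ Finset.range (s+1),
      (((n / η ^ k : ℕ) : ℝ) - ((ntil / η ^ k : ℕ) : ℝ)) * ((R * η ^ k / η ^ s : ℕ) : ℝ)
        ≤ ((n:ℝ) - ntil) * R / e ^ s + (R:ℝ) * e ^ k / e ^ s := by
    intro k _
    have hA1 : ((n / η ^ k : ℕ) : ℝ) ≤ (n:ℝ) / e ^ k := by
      have := Nat.cast_div_le (α := ℝ) (m := n) (n := η ^ k)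
      simpa using this
    have hA2 : (ntil:ℝ) / e ^ k - 1 ≤ ((ntil / η ^ k : ℕ) : ℝ) := by
      have hm : 0 < η ^ k := pow_pos (by omega) k
      have h : ntil < (ntil / η ^ k + 1) * η ^ k := by
        have h1 := Nat.div_add_mod ntil (η ^ k)
        have h2 := Nat.mod_lt ntil hm
        calc ntil = η ^ k * (ntil / η ^ k) + ntil % η ^ k := h1.symm
          _ < η ^ k * (ntil / η ^ k) + η ^ k := by omega
          _ = (ntil / η ^ k + 1) * η ^ k := by ring
      have h' : (ntil:ℝ) < (((ntil / η ^ k : ℕ) : ℝ) + 1) * e ^ k := by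
        have := (Nat.cast_lt (α := ℝ)).2 h
        push_cast at this
        convert this using 2
      have h'' : (ntil:ℝ) / e ^ k < ((ntil / η ^ k : ℕ) : ℝ) + 1 :=
        (div_lt_iff₀ (hpow k)).2 h'
      linarith
    have hB1 : ((R * η ^ k / η ^ s : ℕ) : ℝ) ≤ (R:ℝ) * e ^ k / e ^ s := by
      have := Nat.cast_div_le (α := ℝ) (m := R * η ^ k) (n := η ^ s)
      push_cast at this
      simpa using this
    have hB0 : (0:ℝ) ≤ ((R * η ^ k / η ^ s : ℕ) : ℝ) := Nat.cast_nonneg _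
    have hA0 : (0:ℝ) ≤ ((n / η ^ k : ℕ) : ℝ) - ((ntil / η ^ k : ℕ) : ℝ) := by
      have : ntil / η ^ k ≤ n / η ^ k := Nat.div_le_div_right hntil
      have := (Nat.cast_le (α := ℝ)).2 this
      linarith
    have hAub : ((n / η ^ k : ℕ) : ℝ) - ((ntil / η ^ k : ℕ) : ℝ)
        ≤ ((n:ℝ) - ntil) / e ^ k + 1 := by
      have : (n:ℝ)/e^k - ((ntil:ℝ)/e^k - 1) = ((n:ℝ) - ntil)/e^k + 1 := by ring
      linarith
    calc (((n / η ^ k : ℕ) : ℝ) - ((ntil / η ^ k : ℕ) : ℝ)) * ((R * η ^ k / η ^ s : ℕ) : ℝ)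
        ≤ (((n:ℝ) - ntil) / e ^ k + 1) * ((R:ℝ) * e ^ k / e ^ s) := by
          apply mul_le_mul hAub hB1 hB0
          have h1 : (0:ℝ) ≤ ((n:ℝ) - ntil) / e ^ k := by
            apply div_nonneg _ (le_of_lt (hpow k))
            have : (ntil:ℝ) ≤ n := by exact_mod_cast hntil
            linarith
          linarith
      _ = ((n:ℝ) - ntil) * R / e ^ s + (R:ℝ) * e ^ k / e ^ s := by
          field_simp
  have hsum := Finset.sum_le_sum key
  refine hsum.trans ?_
  rw [Finset.sum_add_distrib, Finset.sum_const, Finset.card_range]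
  have hgeo : ∑ k ∈ Finset.range (s+1), (R:ℝ) * e ^ k / e ^ s
      = (R:ℝ) * ((e ^ (s+1) - 1) / (e - 1)) / e ^ s := by
    rw [← Finset.sum_div, ← Finset.mul_sum, geom_sum_eq (by linarith : e ≠ 1)]
  rw [hgeo]
  have hne : e - 1 ≠ 0 := by linarith
  have hnes : e ^ s ≠ 0 := ne_of_gt (hpow s)
  apply le_of_eq
  rw [nsmul_eq_mul]
  push_cast
  field_simp
end

section
/- Let η, n, ñ, R, s be natural numbers with η ≥ 2, ñ ≤ n, and R ≥ η^s, and suppose D := (s+1)·(n·R + η^s)·(η−1) − (η^{s+1} − 1)·(R + n) > 0. Then, as real numbers, ∑_{k=0}^{s} (⌊n/η^k⌋ − ⌊ñ/η^k⌋)·⌊R·η^k/η^s⌋ ≤ (1 − [(s+1)·(ñ·R + η^s)·(η−1) − (η^{s+1} − 1)·(2R + n)] / D) · ∑_{k=0}^{s} ⌊n/η^k⌋·⌊R·η^k/η^s⌋. -/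
set_option maxHeartbeats 1000000


open Finset

/-- Theorem 2 a): improvement of the number of pulls of eID-SH in comparison
to a re-run of SH. -/
theorem stmt_9 (η n ntil R s : ℕ) (hη : 2 ≤ η) (hntil : ntil ≤ n) (hR : η ^ s ≤ R)
    (hD : 0 < ((s : ℝ) + 1) * ((n : ℝ) * R + (η : ℝ) ^ s) * ((η : ℝ) - 1)
        - ((η : ℝ) ^ (s + 1) - 1) * ((R : ℝ) + n)) :
    ∑ k ∈ Finset.range (s + 1),
        (((n / η ^ k : ℕ) : ℝ) - ((ntil / η ^ k : ℕ) : ℝ)) * ((R * η ^ k / η ^ s : ℕ) : ℝ)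
      ≤ (1 - (((s : ℝ) + 1) * ((ntil : ℝ) * R + (η : ℝ) ^ s) * ((η : ℝ) - 1)
              - ((η : ℝ) ^ (s + 1) - 1) * (2 * (R : ℝ) + n))
            / (((s : ℝ) + 1) * ((n : ℝ) * R + (η : ℝ) ^ s) * ((η : ℝ) - 1)
              - ((η : ℝ) ^ (s + 1) - 1) * ((R : ℝ) + n)))
        * ∑ k ∈ Finset.range (s + 1),
            ((n / η ^ k : ℕ) : ℝ) * ((R * η ^ k / η ^ s : ℕ) : ℝ) := by
  have hη1 : (1 : ℝ) < (η : ℝ) := by exact_mod_cast lt_of_lt_of_le one_lt_two hη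
  have hη0 : (0 : ℝ) < (η : ℝ) := lt_trans one_pos hη1
  set q : ℝ := (η : ℝ) ^ s with hqdef
  have hq : 0 < q := pow_pos hη0 s
  set E : ℝ := ∑ k ∈ Finset.range (s + 1), (η : ℝ) ^ k with hEdef
  have hE : ((η : ℝ) - 1) * E = (η : ℝ) ^ (s + 1) - 1 := by
    rw [hEdef, mul_comm]; exact geom_sum_mul _ _
  -- reflected geometric sum
  have hrefl : ∑ k ∈ Finset.range (s + 1), q / (η : ℝ) ^ k = E := by
    rw [hEdef, ← Finset.sum_range_reflect]
    refine Finset.sum_congr rfl fun k hk => ?_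
    rw [Finset.mem_range] at hk
    have hk' : k ≤ s := Nat.lt_succ_iff.mp hk
    have h1 : s + 1 - 1 - k = s - k := by omega
    rw [h1, hqdef, div_eq_iff (by positivity), ← pow_add]
    congr 1; omega
  -- abbreviations
  set D : ℝ := ((s : ℝ) + 1) * ((n : ℝ) * R + q) * ((η : ℝ) - 1)
      - ((η : ℝ) ^ (s + 1) - 1) * ((R : ℝ) + n) with hDdef
  set A : ℝ := ((s : ℝ) + 1) * ((ntil : ℝ) * R + q) * ((η : ℝ) - 1)
      - ((η : ℝ) ^ (s + 1) - 1) * (2 * (R : ℝ) + n) with hAdef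
  set c : ℝ := q * ((η : ℝ) - 1) with hcdef
  have hc : 0 < c := mul_pos hq (by linarith)
  -- termwise upper bound on LHS
  have key1 : ∀ k ∈ Finset.range (s + 1),
      (((n / η ^ k : ℕ) : ℝ) - ((ntil / η ^ k : ℕ) : ℝ)) * ((R * η ^ k / η ^ s : ℕ) : ℝ)
      ≤ (((n : ℝ) - ntil) * R + (R : ℝ) * (η : ℝ) ^ k) / q := by
    intro k hk
    have hpk : (0 : ℝ) < (η : ℝ) ^ k := pow_pos hη0 k
    have hfloor2 : ((R * η ^ k / η ^ s : ℕ) : ℝ) ≤ (R : ℝ) * (η : ℝ) ^ k / q := by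
      have := Nat.cast_div_le (α := ℝ) (m := R * η ^ k) (n := η ^ s)
      push_cast at this
      simpa [hqdef] using this
    have hfloor2nn : (0 : ℝ) ≤ ((R * η ^ k / η ^ s : ℕ) : ℝ) := Nat.cast_nonneg _
    have hdiffnn : (0 : ℝ) ≤ ((n / η ^ k : ℕ) : ℝ) - ((ntil / η ^ k : ℕ) : ℝ) := by
      have h : ntil / η ^ k ≤ n / η ^ k := Nat.div_le_div_right hntil
      have := (Nat.cast_le (α := ℝ)).mpr h
      linarith
    have hdiff : ((n / η ^ k : ℕ) : ℝ) - ((ntil / η ^ k : ℕ) : ℝ)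
        ≤ ((n : ℝ) - ntil) / (η : ℝ) ^ k + 1 := by
      have h1 : ((n / η ^ k : ℕ) : ℝ) ≤ (n : ℝ) / (η : ℝ) ^ k := by
        have := Nat.cast_div_le (α := ℝ) (m := n) (n := η ^ k)
        push_cast at this
        simpa using this
      have h2 : (ntil : ℝ) / (η : ℝ) ^ k - 1 ≤ ((ntil / η ^ k : ℕ) : ℝ) := by
        have hlt : ntil < η ^ k * (ntil / η ^ k + 1) :=
          Nat.lt_mul_div_succ _ (pow_pos (by omega) k)
        have hc' := (Nat.cast_lt (α := ℝ)).mpr hlt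
        push_cast at hc'
        rw [div_sub_one (ne_of_gt hpk), div_le_iff₀ hpk]
        nlinarith
      have heq : ((n : ℝ) - ntil) / (η : ℝ) ^ k + 1
          = (n : ℝ) / (η : ℝ) ^ k - ((ntil : ℝ) / (η : ℝ) ^ k - 1) := by
        rw [sub_div]; ring
      rw [heq]
      linarith
    have hrhs2nn : (0 : ℝ) ≤ (R : ℝ) * (η : ℝ) ^ k / q := by positivity
    have hdiff1nn : (0:ℝ) ≤ ((n : ℝ) - ntil) / (η : ℝ) ^ k + 1 := by
      have := (Nat.cast_le (α := ℝ)).mpr hntil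
      have : (0:ℝ) ≤ ((n : ℝ) - ntil) / (η : ℝ) ^ k := by
        apply div_nonneg _ (le_of_lt hpk); linarith
      linarith
    calc (((n / η ^ k : ℕ) : ℝ) - ((ntil / η ^ k : ℕ) : ℝ)) * ((R * η ^ k / η ^ s : ℕ) : ℝ)
        ≤ (((n : ℝ) - ntil) / (η : ℝ) ^ k + 1) * ((R * η ^ k / η ^ s : ℕ) : ℝ) :=
          mul_le_mul_of_nonneg_right hdiff hfloor2nn
      _ ≤ (((n : ℝ) - ntil) / (η : ℝ) ^ k + 1) * ((R : ℝ) * (η : ℝ) ^ k / q) :=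
          mul_le_mul_of_nonneg_left hfloor2 hdiff1nn
      _ = (((n : ℝ) - ntil) * R + (R : ℝ) * (η : ℝ) ^ k) / q := by
          field_simp
  -- termwise lower bound on T
  have key2 : ∀ k ∈ Finset.range (s + 1),
      ((n : ℝ) * R + q - (R : ℝ) * (η : ℝ) ^ k - (n : ℝ) * (q / (η : ℝ) ^ k)) / q
      ≤ ((n / η ^ k : ℕ) : ℝ) * ((R * η ^ k / η ^ s : ℕ) : ℝ) := by
    intro k hk
    rw [Finset.mem_range] at hk
    have hk' : k ≤ s := Nat.lt_succ_iff.mp hk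
    have hpk : (0 : ℝ) < (η : ℝ) ^ k := pow_pos hη0 k
    have hx : (n : ℝ) / (η : ℝ) ^ k - 1 ≤ ((n / η ^ k : ℕ) : ℝ) := by
      have hlt : n < η ^ k * (n / η ^ k + 1) :=
        Nat.lt_mul_div_succ _ (pow_pos (by omega) k)
      have hc' := (Nat.cast_lt (α := ℝ)).mpr hlt
      push_cast at hc'
      rw [div_sub_one (ne_of_gt hpk), div_le_iff₀ hpk]
      nlinarith
    have hy : (R : ℝ) * (η : ℝ) ^ k / q - 1 ≤ ((R * η ^ k / η ^ s : ℕ) : ℝ) := by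
      have hlt : R * η ^ k < η ^ s * (R * η ^ k / η ^ s + 1) :=
        Nat.lt_mul_div_succ _ (pow_pos (by omega) s)
      have hc' := (Nat.cast_lt (α := ℝ)).mpr hlt
      push_cast at hc'
      rw [div_sub_one (ne_of_gt hq), div_le_iff₀ hq, hqdef]
      nlinarith
    have hynn : (0 : ℝ) ≤ (R : ℝ) * (η : ℝ) ^ k / q - 1 := by
      rw [sub_nonneg, le_div_iff₀ hq, one_mul, hqdef]
      have h1 : ((η:ℝ) ^ s) ≤ (R : ℝ) := by exact_mod_cast hR
      have h2 : (1:ℝ) ≤ (η : ℝ) ^ k := one_le_pow₀ (le_of_lt hη1)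
      nlinarith
    have hxnn : (0 : ℝ) ≤ ((n / η ^ k : ℕ) : ℝ) := Nat.cast_nonneg _
    have hstep : ((n : ℝ) / (η : ℝ) ^ k - 1) * ((R : ℝ) * (η : ℝ) ^ k / q - 1)
        ≤ ((n / η ^ k : ℕ) : ℝ) * ((R * η ^ k / η ^ s : ℕ) : ℝ) :=
      le_trans (mul_le_mul_of_nonneg_right hx hynn)
        (mul_le_mul_of_nonneg_left hy hxnn)
    have heq : ((n : ℝ) / (η : ℝ) ^ k - 1) * ((R : ℝ) * (η : ℝ) ^ k / q - 1)
        = ((n : ℝ) * R + q - (R : ℝ) * (η : ℝ) ^ k - (n : ℝ) * (q / (η : ℝ) ^ k)) / q := by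
      field_simp
      ring
    linarith [hstep, heq.le, heq.ge]
  -- sum bounds
  have hsumE : ∑ k ∈ Finset.range (s + 1), (R : ℝ) * (η : ℝ) ^ k = (R : ℝ) * E := by
    rw [hEdef, Finset.mul_sum]
  have hL : ∑ k ∈ Finset.range (s + 1),
      (((n / η ^ k : ℕ) : ℝ) - ((ntil / η ^ k : ℕ) : ℝ)) * ((R * η ^ k / η ^ s : ℕ) : ℝ)
      ≤ (D - A) / c := by
    have h1 := Finset.sum_le_sum key1
    have h2 : ∑ k ∈ Finset.range (s + 1),
        ((((n : ℝ) - ntil) * R + (R : ℝ) * (η : ℝ) ^ k) / q) = (D - A) / c := by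
      rw [← Finset.sum_div, Finset.sum_add_distrib, Finset.sum_const, Finset.card_range,
        hsumE, hDdef, hAdef, hcdef, div_eq_div_iff (ne_of_gt hq) (ne_of_gt hc)]
      push_cast
      linear_combination (q * (R : ℝ)) * hE
    linarith [h1, h2.le, h2.ge]
  have hT : D / c ≤ ∑ k ∈ Finset.range (s + 1),
      ((n / η ^ k : ℕ) : ℝ) * ((R * η ^ k / η ^ s : ℕ) : ℝ) := by
    have h1 := Finset.sum_le_sum key2
    have h2 : ∑ k ∈ Finset.range (s + 1),
        (((n : ℝ) * R + q - (R : ℝ) * (η : ℝ) ^ k - (n : ℝ) * (q / (η : ℝ) ^ k)) / q)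
        = D / c := by
      rw [← Finset.sum_div, Finset.sum_sub_distrib, Finset.sum_sub_distrib,
        Finset.sum_const, Finset.card_range, hsumE, ← Finset.mul_sum, hrefl,
        hDdef, hcdef, div_eq_div_iff (ne_of_gt hq) (ne_of_gt hc)]
      push_cast
      linear_combination (-(q * ((n : ℝ) + R))) * hE
    linarith [h1, h2.le, h2.ge]
  -- nonnegativity of D - A
  have hDA : 0 ≤ D - A := by
    have h1 : D - A = ((s : ℝ) + 1) * (((n : ℝ) - ntil) * R) * ((η : ℝ) - 1)
        + ((η : ℝ) ^ (s + 1) - 1) * R := by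
      rw [hDdef, hAdef]; ring
    have hnn : (0:ℝ) ≤ (n : ℝ) - ntil := by
      have := (Nat.cast_le (α := ℝ)).mpr hntil; linarith
    have hpow : (1:ℝ) ≤ (η : ℝ) ^ (s + 1) := one_le_pow₀ (le_of_lt hη1)
    have hs0 : (0:ℝ) ≤ (s : ℝ) := Nat.cast_nonneg _
    have hR0 : (0:ℝ) ≤ (R : ℝ) := Nat.cast_nonneg _
    rw [h1]
    have h3 : (0:ℝ) ≤ ((s : ℝ) + 1) * (((n : ℝ) - ntil) * R) * ((η : ℝ) - 1) := by
      apply mul_nonneg (mul_nonneg (by linarith) (mul_nonneg hnn hR0)) (by linarith)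
    nlinarith
  -- finish
  have hone : (1 : ℝ) - A / D = (D - A) / D := by
    conv_rhs => rw [sub_div]
    rw [div_self (ne_of_gt hD)]
  rw [hone]
  calc ∑ k ∈ Finset.range (s + 1),
        (((n / η ^ k : ℕ) : ℝ) - ((ntil / η ^ k : ℕ) : ℝ)) * ((R * η ^ k / η ^ s : ℕ) : ℝ)
      ≤ (D - A) / c := hL
    _ = (D - A) / D * (D / c) := by
        rw [div_mul_div_comm, mul_comm D c, mul_div_mul_right _ _ (ne_of_gt hD)]
    _ ≤ (D - A) / D * ∑ k ∈ Finset.range (s + 1),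
          ((n / η ^ k : ℕ) : ℝ) * ((R * η ^ k / η ^ s : ℕ) : ℝ) :=
        mul_le_mul_of_nonneg_left hT (div_nonneg hDA (le_of_lt hD))
end

section
/- Let η, n, ñ, R, s be natural numbers with η ≥ 2, ñ ≤ n, and R ≥ η^s, and suppose D := (s+1)·(n·R + η^s)·(η−1) − (η^{s+1} − 1)·(R + n) > 0. Then, as real numbers, (n−ñ)·⌊R/η^s⌋ + ∑_{k=1}^{s} ⌊n/η^k⌋·⌊R·η^k/η^s⌋ ≤ (1 − [(η−1)·((s+1)·η^s + R·ñ) − (η^{s+1} − 1)·(R + n)] / D) · ∑_{k=0}^{s} ⌊n/η^k⌋·⌊R·η^k/η^s⌋. -/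
open Finset

set_option maxHeartbeats 1000000 in
/-- Theorem 2 b): improvement of the number of pulls of p/dID-SH in comparison
to a re-run of SH. -/
theorem stmt_10 (η n ntil R s : ℕ) (hη : 2 ≤ η) (hntil : ntil ≤ n) (hR : η ^ s ≤ R)
    (hD : 0 < ((s : ℝ) + 1) * ((n : ℝ) * R + (η : ℝ) ^ s) * ((η : ℝ) - 1)
        - ((η : ℝ) ^ (s + 1) - 1) * ((R : ℝ) + n)) :
    ((n : ℝ) - ntil) * ((R / η ^ s : ℕ) : ℝ)
        + ∑ k ∈ Finset.Icc 1 s, ((n / η ^ k : ℕ) : ℝ) * ((R * η ^ k / η ^ s : ℕ) : ℝ)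
      ≤ (1 - (((η : ℝ) - 1) * (((s : ℝ) + 1) * (η : ℝ) ^ s + (R : ℝ) * ntil)
              - ((η : ℝ) ^ (s + 1) - 1) * ((R : ℝ) + n))
            / (((s : ℝ) + 1) * ((n : ℝ) * R + (η : ℝ) ^ s) * ((η : ℝ) - 1)
              - ((η : ℝ) ^ (s + 1) - 1) * ((R : ℝ) + n)))
        * ∑ k ∈ Finset.range (s + 1),
            ((n / η ^ k : ℕ) : ℝ) * ((R * η ^ k / η ^ s : ℕ) : ℝ) := by
  have hη0 : 0 < η := by omega
  have hEn : 0 < η ^ s := pow_pos hη0 s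
  have hη1 : (2 : ℝ) ≤ (η : ℝ) := by exact_mod_cast hη
  set E : ℝ := (η : ℝ) ^ s with hEdef
  have hEpos : 0 < E := by positivity
  set S : ℝ := ∑ i ∈ Finset.range (s + 1), (η : ℝ) ^ i with hSdef
  have hgeom : (η : ℝ) ^ (s + 1) - 1 = S * ((η : ℝ) - 1) := (geom_sum_mul (η : ℝ) (s + 1)).symm
  set r : ℕ := R / η ^ s with hrdef
  set f : ℕ → ℝ := fun k => ((n / η ^ k : ℕ) : ℝ) * ((R * η ^ k / η ^ s : ℕ) : ℝ) with hfdef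
  set Tail : ℝ := ∑ k ∈ Finset.Icc 1 s, f k with hTaildef
  -- split the full sum
  have hins : Finset.range (s + 1) = insert 0 (Finset.Icc 1 s) := by
    ext x; simp [Finset.mem_Icc, Finset.mem_range]; omega
  have hf0 : f 0 = (n : ℝ) * (r : ℝ) := by
    simp [hfdef, hrdef, pow_zero, Nat.div_one]
  have hT : (∑ k ∈ Finset.range (s + 1), f k) = (n : ℝ) * (r : ℝ) + Tail := by
    rw [hins, Finset.sum_insert (by simp)]
    rw [hf0]
  -- basic facts
  have f1 : (ntil : ℝ) ≤ (n : ℝ) := by exact_mod_cast hntil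
  have f2 : E ≤ (R : ℝ) := by
    have : ((η ^ s : ℕ) : ℝ) ≤ (R : ℝ) := by exact_mod_cast hR
    push_cast at this; exact this
  have f3 : (s : ℝ) + 1 ≤ S := by
    have h1 : ∀ i ∈ Finset.range (s + 1), (1 : ℝ) ≤ (η : ℝ) ^ i := by
      intro i _; exact one_le_pow₀ (by linarith)
    calc (s : ℝ) + 1 = ∑ _i ∈ Finset.range (s + 1), (1 : ℝ) := by simp
      _ ≤ S := Finset.sum_le_sum h1
  have f4 : E ≤ S := by
    refine Finset.single_le_sum (f := fun i => (η : ℝ) ^ i) (fun i _ => by positivity) ?_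
    simp
  have hSnn : (0 : ℝ) ≤ S := by linarith
  have f5 : (R : ℝ) + 1 ≤ E * (r : ℝ) + E := by
    have h1 : R + 1 ≤ η ^ s * (R / η ^ s) + η ^ s := by
      have h2 := Nat.div_add_mod R (η ^ s)
      have h3 := Nat.mod_lt R hEn
      omega
    have h4 : ((R : ℝ)) + 1 ≤ ((η : ℝ)) ^ s * ((R / η ^ s : ℕ) : ℝ) + (η : ℝ) ^ s := by
      exact_mod_cast h1
    exact h4
  have f7 : (0 : ℝ) ≤ Tail := by
    apply Finset.sum_nonneg; intro k _; positivity
  have f6 : E * Tail ≤ (s : ℝ) * n * R := by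
    rw [hTaildef, Finset.mul_sum]
    calc ∑ k ∈ Finset.Icc 1 s, E * f k ≤ ∑ _k ∈ Finset.Icc 1 s, (n : ℝ) * R := by
          apply Finset.sum_le_sum
          intro k _
          have h1 : η ^ s * ((n / η ^ k) * (R * η ^ k / η ^ s)) ≤ n * R := by
            calc η ^ s * ((n / η ^ k) * (R * η ^ k / η ^ s))
                = (n / η ^ k) * ((R * η ^ k / η ^ s) * η ^ s) := by ring
              _ ≤ (n / η ^ k) * (R * η ^ k) :=
                  Nat.mul_le_mul_left _ (Nat.div_mul_le_self _ _)
              _ = ((n / η ^ k) * η ^ k) * R := by ring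
              _ ≤ n * R := Nat.mul_le_mul_right _ (Nat.div_mul_le_self _ _)
          have h2 : ((η : ℝ)) ^ s * (((n / η ^ k : ℕ) : ℝ) * ((R * η ^ k / η ^ s : ℕ) : ℝ))
              ≤ (n : ℝ) * R := by exact_mod_cast h1
          exact h2
      _ = (s : ℝ) * n * R := by
          rw [Finset.sum_const, Nat.card_Icc]
          simp only [nsmul_eq_mul]
          push_cast
          ring
  have hrnn : (0 : ℝ) ≤ (r : ℝ) := Nat.cast_nonneg r
  have hnnn : (0 : ℝ) ≤ (n : ℝ) := Nat.cast_nonneg n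
  have hRnn : (0 : ℝ) ≤ (R : ℝ) := Nat.cast_nonneg R
  have hntnn : (0 : ℝ) ≤ (ntil : ℝ) := Nat.cast_nonneg ntil
  have hsnn : (0 : ℝ) ≤ (s : ℝ) := Nat.cast_nonneg s
  -- abbreviations
  set m : ℝ := (s : ℝ) + 1 with hmdef
  set C : ℝ := S * ((R : ℝ) + n) with hCdef
  have hmE_SR : m * E ≤ S * R := mul_le_mul f3 f2 (le_of_lt hEpos) hSnn
  have hntE_Sn : (ntil : ℝ) * E ≤ (n : ℝ) * S := mul_le_mul f1 f4 (le_of_lt hEpos) hnnn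
  have hCmE : m * E ≤ C := by
    have : S * R ≤ C := by
      rw [hCdef]; nlinarith [mul_nonneg hSnn hnnn]
    linarith
  -- key bound
  have hkey : ((R : ℝ) * ntil + m * E - C) * Tail ≤ (s : ℝ) * n * R * ((ntil : ℝ) * r) := by
    rcases le_or_gt ((R : ℝ) * ntil + m * E - C) 0 with h | h
    · have h1 : ((R : ℝ) * ntil + m * E - C) * Tail ≤ 0 := mul_nonpos_of_nonpos_of_nonneg h f7
      have h2 : (0 : ℝ) ≤ (s : ℝ) * n * R * ((ntil : ℝ) * r) := by positivity
      linarith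
    · have hstep : (R : ℝ) * ntil + m * E - C ≤ (ntil : ℝ) * (E * r) := by
        have h1 : (R : ℝ) * ntil + m * E - C ≤ (ntil : ℝ) * ((R : ℝ) - E + 1) := by
          rw [hCdef]; nlinarith
        have h2 : (ntil : ℝ) * ((R : ℝ) - E + 1) ≤ (ntil : ℝ) * (E * r) := by
          apply mul_le_mul_of_nonneg_left _ hntnn
          linarith
        linarith
      calc ((R : ℝ) * ntil + m * E - C) * Tail ≤ ((ntil : ℝ) * (E * r)) * Tail :=
            mul_le_mul_of_nonneg_right hstep f7
        _ = ((ntil : ℝ) * r) * (E * Tail) := by ring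
        _ ≤ ((ntil : ℝ) * r) * ((s : ℝ) * n * R) := by
            apply mul_le_mul_of_nonneg_left f6 (by positivity)
        _ = (s : ℝ) * n * R * ((ntil : ℝ) * r) := by ring
  -- main inequality
  have hmain : (m * E + (R : ℝ) * ntil - C) * ((n : ℝ) * r + Tail)
      ≤ (m * ((n : ℝ) * R) + m * E - C) * ((ntil : ℝ) * r) := by
    have hnn1 : (0 : ℝ) ≤ (C - m * E) * (((n : ℝ) - ntil) * r) :=
      mul_nonneg (by linarith) (mul_nonneg (by linarith) hrnn)
    have iden : (m * ((n : ℝ) * R) + m * E - C) * ((ntil : ℝ) * r)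
        - (m * E + (R : ℝ) * ntil - C) * ((n : ℝ) * r + Tail)
        = (C - m * E) * (((n : ℝ) - ntil) * r)
          + ((s : ℝ) * n * R * ((ntil : ℝ) * r) - ((R : ℝ) * ntil + m * E - C) * Tail) := by
      rw [hmdef]; ring
    linarith
  -- denominators
  set Dr : ℝ := ((s : ℝ) + 1) * ((n : ℝ) * R + (η : ℝ) ^ s) * ((η : ℝ) - 1)
      - ((η : ℝ) ^ (s + 1) - 1) * ((R : ℝ) + n) with hDrdef
  set Nr : ℝ := ((η : ℝ) - 1) * (((s : ℝ) + 1) * (η : ℝ) ^ s + (R : ℝ) * ntil)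
      - ((η : ℝ) ^ (s + 1) - 1) * ((R : ℝ) + n) with hNrdef
  have hDr : Dr = ((η : ℝ) - 1) * (m * ((n : ℝ) * R) + m * E - C) := by
    rw [hDrdef, hgeom, hCdef, hmdef, hEdef]; ring
  have hNr : Nr = ((η : ℝ) - 1) * (m * E + (R : ℝ) * ntil - C) := by
    rw [hNrdef, hgeom, hCdef, hmdef, hEdef]; ring
  have hηm1 : (0 : ℝ) < (η : ℝ) - 1 := by linarith
  have hNT : Nr * ((n : ℝ) * r + Tail) ≤ ((ntil : ℝ) * r) * Dr := by
    rw [hNr, hDr]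
    calc ((η : ℝ) - 1) * (m * E + (R : ℝ) * ntil - C) * ((n : ℝ) * r + Tail)
        = ((η : ℝ) - 1) * ((m * E + (R : ℝ) * ntil - C) * ((n : ℝ) * r + Tail)) := by ring
      _ ≤ ((η : ℝ) - 1) * ((m * ((n : ℝ) * R) + m * E - C) * ((ntil : ℝ) * r)) :=
          mul_le_mul_of_nonneg_left hmain (le_of_lt hηm1)
      _ = ((ntil : ℝ) * r) * (((η : ℝ) - 1) * (m * ((n : ℝ) * R) + m * E - C)) := by ring
  -- finish
  rw [hT]
  have hdiv : Nr / Dr * ((n : ℝ) * r + Tail) ≤ (ntil : ℝ) * r := by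
    rw [div_mul_eq_mul_div, div_le_iff₀ hD]
    linarith
  have hexp : (1 - Nr / Dr) * ((n : ℝ) * r + Tail)
      = ((n : ℝ) * r + Tail) - Nr / Dr * ((n : ℝ) * r + Tail) := by ring
  rw [hexp]
  linarith
end

section
/- Let η be a natural number with η ≥ 2, let R be a real number with log_η(R) ≥ 2, and set m = ⌊log_η(R)⌋ (a natural number). Then ∑_{s=0}^{m} η·⌈log_η(⌈(m+1)·η^s/(s+1)⌉)⌉ ≤ η·((m+1)·(log_η(log_η(R)) + 4) + m·(m+1)/2 − log_η((m+1)!)). -/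
open Finset

private lemma sum_id_real (n : ℕ) : ∑ s ∈ Finset.range n, (s : ℝ) = (n : ℝ) * ((n : ℝ) - 1) / 2 := by
  induction n with
  | zero => simp
  | succ k ih =>
    rw [Finset.sum_range_succ, ih]
    push_cast
    ring

private lemma sum_logb_fact (b : ℝ) (n : ℕ) :
    ∑ s ∈ Finset.range n, Real.logb b ((s : ℝ) + 1) = Real.logb b (Nat.factorial n) := by
  induction n with
  | zero => simp
  | succ k ih =>
    rw [Finset.sum_range_succ, ih, Nat.factorial_succ]
    push_cast
    rw [Real.logb_mul (by positivity) (by positivity)]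
    ring

/-- Main quantitative computation in the proof of Theorem 3. -/
theorem stmt_13 (η : ℕ) (hη : 2 ≤ η) (R : ℝ) (hR : 2 ≤ Real.logb η R)
    (m : ℕ) (hm : m = ⌊Real.logb η R⌋₊) :
    ∑ s ∈ Finset.range (m + 1),
        (η : ℝ) * ⌈Real.logb η ((⌈((m : ℝ) + 1) * (η : ℝ) ^ s / ((s : ℝ) + 1)⌉ : ℤ) : ℝ)⌉
      ≤ (η : ℝ) * (((m : ℝ) + 1) * (Real.logb η (Real.logb η R) + 4)
          + (m : ℝ) * ((m : ℝ) + 1) / 2 - Real.logb η (Nat.factorial (m + 1))) := by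
  set b : ℝ := (η : ℝ) with hb
  have hb1 : (1 : ℝ) < b := by
    have : (2 : ℝ) ≤ (η : ℝ) := by exact_mod_cast hη
    linarith
  have hb0 : (0 : ℝ) < b := by linarith
  have hb2 : (2 : ℝ) ≤ b := by rw [hb]; exact_mod_cast hη
  set L : ℝ := Real.logb η R with hL
  have hL2 : (2 : ℝ) ≤ L := hR
  have hmL : (m : ℝ) ≤ L := by
    rw [hm]
    exact Nat.floor_le (by linarith)
  have hlogb2 : Real.logb b 2 ≤ 1 := by
    have := Real.logb_le_logb_of_le hb1 (x := 2) (y := b) (by norm_num) (by linarith)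
    simpa [Real.logb_self_eq_one hb1] using this
  -- termwise bound
  have key : ∀ s ∈ Finset.range (m + 1),
      (η : ℝ) * ⌈Real.logb η ((⌈((m : ℝ) + 1) * (η : ℝ) ^ s / ((s : ℝ) + 1)⌉ : ℤ) : ℝ)⌉
        ≤ (η : ℝ) * (Real.logb b L + 4 + (s : ℝ) - Real.logb b ((s : ℝ) + 1)) := by
    intro s hs
    rw [Finset.mem_range] at hs
    have hsm : (s : ℝ) ≤ (m : ℝ) := by exact_mod_cast Nat.lt_succ_iff.mp hs
    set a : ℝ := ((m : ℝ) + 1) * b ^ s / ((s : ℝ) + 1) with ha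
    have hs1 : (0 : ℝ) < (s : ℝ) + 1 := by positivity
    have ha1 : (1 : ℝ) ≤ a := by
      rw [ha, le_div_iff₀ hs1]
      have h1 : (1 : ℝ) ≤ b ^ s := one_le_pow₀ (by linarith)
      nlinarith
    have ha0 : (0 : ℝ) < a := by linarith
    have hceil1 : (1 : ℝ) ≤ ((⌈a⌉ : ℤ) : ℝ) := le_trans ha1 (Int.le_ceil a)
    have hceil2 : ((⌈a⌉ : ℤ) : ℝ) ≤ 2 * a := by
      have := Int.ceil_lt_add_one a
      linarith
    -- logb of the ceiling
    have hlogn : Real.logb b ((⌈a⌉ : ℤ) : ℝ) ≤ Real.logb b (2 * a) :=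
      Real.logb_le_logb_of_le hb1 (by linarith) hceil2
    have hsplit : Real.logb b (2 * a) =
        Real.logb b 2 + (Real.logb b ((m : ℝ) + 1) + (s : ℝ) - Real.logb b ((s : ℝ) + 1)) := by
      rw [ha]
      rw [Real.logb_mul (by norm_num) (by positivity),
        Real.logb_div (by positivity) (by positivity),
        Real.logb_mul (by positivity) (by positivity),
        Real.logb_pow, Real.logb_self_eq_one hb1]
      ring
    have hm1 : Real.logb b ((m : ℝ) + 1) ≤ 1 + Real.logb b L := by
      have h2L : (m : ℝ) + 1 ≤ 2 * L := by linarith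
      have := Real.logb_le_logb_of_le hb1 (by positivity) h2L
      rw [Real.logb_mul (by norm_num) (by linarith)] at this
      linarith
    have hlog_le : Real.logb b ((⌈a⌉ : ℤ) : ℝ)
        ≤ Real.logb b L + 3 + (s : ℝ) - Real.logb b ((s : ℝ) + 1) := by
      rw [hsplit] at hlogn
      linarith
    have hceil3 : (⌈Real.logb b ((⌈a⌉ : ℤ) : ℝ)⌉ : ℝ)
        ≤ Real.logb b L + 4 + (s : ℝ) - Real.logb b ((s : ℝ) + 1) := by
      have := Int.ceil_lt_add_one (Real.logb b ((⌈a⌉ : ℤ) : ℝ))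
      linarith
    exact mul_le_mul_of_nonneg_left hceil3 (by linarith)
  calc ∑ s ∈ Finset.range (m + 1),
        (η : ℝ) * ⌈Real.logb η ((⌈((m : ℝ) + 1) * (η : ℝ) ^ s / ((s : ℝ) + 1)⌉ : ℤ) : ℝ)⌉
      ≤ ∑ s ∈ Finset.range (m + 1),
          (η : ℝ) * (Real.logb b L + 4 + (s : ℝ) - Real.logb b ((s : ℝ) + 1)) :=
        Finset.sum_le_sum key
    _ = (η : ℝ) * (((m : ℝ) + 1) * (Real.logb b L + 4)
          + (m : ℝ) * ((m : ℝ) + 1) / 2 - Real.logb b (Nat.factorial (m + 1))) := by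
        rw [← Finset.mul_sum]
        congr 1
        rw [Finset.sum_sub_distrib, Finset.sum_add_distrib, Finset.sum_const,
          Finset.card_range, sum_id_real, sum_logb_fact]
        push_cast
        ring
end
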